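/- Let l be the list (n repeated n+1 times) followed by (2, 3, ..., n−1, 1, n), for n ≥ 4. Then the expressed permutation P = (n, 2, 3, ..., n−1, 1) satisfies HAM(P) = n − 2, and no single-element deletion, insertion, or substitution applied to l yields a list whose expressed permutation P' satisfies HAM(P') > n − 2. -/

import Mathlib

/-- First-occurrence deduplication: keep only the first occurrence of each element. -/
def expressList : List ℕ → List ℕ
  | [] => []
  | a :: l => a :: expressList (l.filter (· ≠ a))
termination_by l => l.length
decreasing_by
  simpa using Nat.lt_succ_of_le ((List.length_filter_le _ _).trans_eq List.length_attach)

/-- `HAM` of a (possibly incomplete) permutation given as a list: the number of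
(1-based) positions `i` holding the element `i`. -/
def hamList (P : List ℕ) : ℕ :=
  (List.range P.length).countP (fun i => decide (P.getD i 0 = i + 1))

/-- The worst-case list: `n` repeated `n + 1` times, then `2, 3, …, n - 1`, then `1, n`. -/
def worstList2 (n : ℕ) : List ℕ :=
  List.replicate (n + 1) n ++ (List.range (n - 2)).map (· + 2) ++ [1, n]
/-!
Every single edit of `worstList2 n = n :: n :: …` leaves `n` among the first two entries, hence
the expressed permutation, a duplicate-free list with entries at most `n`, holds `n` at a
position `j ≤ 1`. Its fixed points are then positions `i ≠ j` with `i + 1 < n`, so there are at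
most `n - 2` of them; for `worstList2 n` itself, positions `2, …, n - 1` are fixed.
-/

@[elab_as_elim]
theorem expressList_induction {motive : List ℕ → Prop} (nil : motive [])
    (cons : ∀ a l, motive (l.filter (· ≠ a)) → motive (a :: l)) (l : List ℕ) : motive l :=
  expressList.induct motive nil
    (fun a l h => cons a l (by rwa [List.unattach_filter (hf := fun _ _ => rfl),
      List.unattach_attach] at h)) l

@[simp]
theorem expressList_nil : expressList [] = [] := by
  rw [expressList]

@[simp]
theorem expressList_cons (a : ℕ) (l : List ℕ) :
    expressList (a :: l) = a :: expressList (l.filter (· ≠ a)) := by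
  rw [expressList]

@[simp]
theorem mem_expressList {a : ℕ} {l : List ℕ} : a ∈ expressList l ↔ a ∈ l := by
  induction l using expressList_induction with
  | nil => simp
  | cons b l ih =>
    rw [expressList_cons, List.mem_cons, ih, List.mem_filter]
    by_cases h : a = b <;> simp [h]

theorem nodup_expressList (l : List ℕ) : (expressList l).Nodup := by
  induction l using expressList_induction with
  | nil => simp
  | cons a l ih => simpa using ih

theorem expressList_eq_self_of_nodup {l : List ℕ} (hl : l.Nodup) : expressList l = l := by
  induction l using expressList_induction with
  | nil => exact expressList_nil
  | cons a l ih =>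
    rw [List.nodup_cons] at hl
    have hfilter : l.filter (· ≠ a) = l :=
      List.filter_eq_self.2 fun x hx => by simpa using ne_of_mem_of_not_mem hx hl.1
    rw [expressList_cons, ih (hl.2.filter _), hfilter]

theorem hamList_eq_card (P : List ℕ) :
    hamList P = ((Finset.range P.length).filter fun i => P.getD i 0 = i + 1).card := by
  simp [hamList, Finset.card_def, Finset.filter_val, Finset.range_val, Multiset.range,
    List.countP_eq_length_filter]

theorem hamList_le_of_getElem?_eq {P : List ℕ} {n j : ℕ} (hP : P.Nodup) (hle : ∀ v ∈ P, v ≤ n)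
    (hj : P[j]? = some n) (hjn : j + 2 ≤ n) : hamList P ≤ n - 2 := by
  obtain ⟨hjP, hPj⟩ := List.getElem?_eq_some_iff.1 hj
  rw [hamList_eq_card]
  calc _ ≤ ((Finset.range (n - 1)).erase j).card := Finset.card_le_card fun i hi => by
          obtain ⟨hiP, hfix⟩ := Finset.mem_filter.1 hi
          rw [Finset.mem_range] at hiP
          rw [List.getD_eq_getElem _ _ hiP] at hfix
          have hij : i ≠ j := by rintro rfl; omega
          have hin : P[i] ≠ n := fun h => hij ((hP.getElem_inj_iff).1 (h.trans hPj.symm))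
          have := hle _ (List.getElem_mem hiP)
          simp only [Finset.mem_erase, Finset.mem_range]
          omega
    _ = n - 2 := by
          rw [Finset.card_erase_of_mem (Finset.mem_range.2 (by omega)), Finset.card_range]
          omega

theorem hamList_expressList_le {l : List ℕ} {n : ℕ} (hn : 3 ≤ n) (hle : ∀ v ∈ l, v ≤ n)
    (hmem : n ∈ l.take 2) : hamList (expressList l) ≤ n - 2 := by
  obtain ⟨j, hj, hjn⟩ : ∃ j, (expressList l)[j]? = some n ∧ j + 2 ≤ n := by
    match l, hmem with
    | b :: t, hmem =>
      by_cases hb : b = n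
      · exact ⟨0, by simp [hb], by omega⟩
      · obtain ⟨t, rfl⟩ : ∃ t', t = n :: t' := by
          rcases t with _ | ⟨c, t⟩ <;> simp [Ne.symm hb] at hmem
          exact ⟨t, by rw [hmem]⟩
        exact ⟨1, by simp [Ne.symm hb], by omega⟩
  exact hamList_le_of_getElem?_eq (nodup_expressList l)
    (fun v hv => hle v (mem_expressList.1 hv)) hj hjn

section Edits

variable {α : Type*} (a x : α) (l : List α) (i : ℕ)

theorem mem_take_two_eraseIdx_cons_cons : a ∈ ((a :: a :: l).eraseIdx i).take 2 := by
  cases i <;> simp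

theorem mem_take_two_insertIdx_cons_cons : a ∈ ((a :: a :: l).insertIdx i x).take 2 := by
  cases i <;> simp

theorem mem_take_two_set_cons_cons : a ∈ ((a :: a :: l).set i x).take 2 := by
  cases i <;> simp

end Edits

theorem worstList2_eq_cons {n : ℕ} :
    worstList2 n = n :: (List.replicate n n ++ (List.range (n - 2)).map (· + 2) ++ [1, n]) := by
  simp [worstList2, List.replicate_succ]

theorem worstList2_eq_cons_cons {n : ℕ} (hn : 1 ≤ n) :
    ∃ r, worstList2 n = n :: n :: r := by
  obtain ⟨m, rfl⟩ := Nat.exists_eq_add_of_le' hn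
  exact ⟨_, by rw [worstList2_eq_cons, List.replicate_succ, List.cons_append, List.cons_append]⟩

theorem le_of_mem_worstList2 {n v : ℕ} (hn : 2 ≤ n) (hv : v ∈ worstList2 n) : v ≤ n := by
  simp only [worstList2, List.mem_append, List.mem_replicate, List.mem_map, List.mem_range,
    List.mem_cons, List.not_mem_nil, or_false] at hv
  rcases hv with (⟨-, rfl⟩ | ⟨k, hk, rfl⟩) | rfl | rfl <;> omega

theorem expressList_worstList2 {n : ℕ} (hn : 3 ≤ n) :
    expressList (worstList2 n) = n :: ((List.range (n - 2)).map (· + 2) ++ [1]) := by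
  set s := (List.range (n - 2)).map (· + 2)
  have hs : ∀ v ∈ s, 2 ≤ v ∧ v < n := by
    simp only [s, List.mem_map, List.mem_range]
    rintro _ ⟨k, hk, rfl⟩
    omega
  have hfilter : (List.replicate n n ++ s ++ [1, n]).filter (· ≠ n) = s ++ [1] := by
    rw [List.filter_append, List.filter_append, List.filter_eq_nil_iff.2 (by simp),
      List.filter_eq_self.2 fun v hv => by simpa using (hs v hv).2.ne]
    simp [show 1 ≠ n by omega]
  have hnodup : (s ++ [1]).Nodup :=
    List.nodup_append.2 ⟨List.nodup_range.map (add_left_injective 2), by simp,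
      fun v hv w hw => by
        rw [List.mem_singleton] at hw
        have := hs v hv
        omega⟩
  rw [worstList2_eq_cons, expressList_cons, hfilter, expressList_eq_self_of_nodup hnodup]

theorem hamList_expressList_worstList2 {n : ℕ} (hn : 3 ≤ n) :
    hamList (expressList (worstList2 n)) = n - 2 := by
  refine le_antisymm (hamList_expressList_le hn (fun v => le_of_mem_worstList2 (by omega))
    (by obtain ⟨r, hr⟩ := worstList2_eq_cons_cons (n := n) (by omega); simp [hr])) ?_
  rw [expressList_worstList2 hn, hamList_eq_card]
  calc n - 2 = (Finset.Icc 1 (n - 2)).card := by simp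
    _ ≤ _ := Finset.card_le_card fun i hi => by
      obtain ⟨hi1, hi2⟩ := Finset.mem_Icc.1 hi
      obtain ⟨k, rfl⟩ := Nat.exists_eq_add_of_le' hi1
      have hk : k < n - 2 := by omega
      refine Finset.mem_filter.2 ⟨Finset.mem_range.2 ?_, ?_⟩
      · simp only [List.length_cons, List.length_append, List.length_map, List.length_range]
        omega
      · simp [List.getElem?_append_left, hk]

theorem worstList2_hard (n : ℕ) (hn : 4 ≤ n) :
    expressList (worstList2 n) = n :: ((List.range (n - 2)).map (· + 2) ++ [1]) ∧
    hamList (expressList (worstList2 n)) = n - 2 ∧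
    ∀ l' : List ℕ,
      ((∃ i, l' = (worstList2 n).eraseIdx i) ∨
       (∃ i x, 1 ≤ x ∧ x ≤ n ∧ l' = (worstList2 n).insertIdx i x) ∨
       (∃ i x, 1 ≤ x ∧ x ≤ n ∧ l' = (worstList2 n).set i x)) →
      ¬ (n - 2 < hamList (expressList l')) := by
  refine ⟨expressList_worstList2 (by omega), hamList_expressList_worstList2 (by omega), ?_⟩
  have hle : ∀ v ∈ worstList2 n, v ≤ n := fun v => le_of_mem_worstList2 (by omega)
  obtain ⟨r, hr⟩ := worstList2_eq_cons_cons (n := n) (by omega)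
  rintro l' (⟨i, rfl⟩ | ⟨i, x, -, hx, rfl⟩ | ⟨i, x, -, hx, rfl⟩) <;> rw [not_lt]
  · exact hamList_expressList_le (by omega) (fun v hv => hle v (List.mem_of_mem_eraseIdx hv))
      (hr ▸ mem_take_two_eraseIdx_cons_cons n r i)
  · refine hamList_expressList_le (by omega) (fun v hv => ?_)
      (hr ▸ mem_take_two_insertIdx_cons_cons n x r i)
    rcases List.mem_cons.1 (List.insertIdx_subset_cons i x _ hv) with rfl | hv
    exacts [hx, hle v hv]
  · refine hamList_expressList_le (by omega) (fun v hv => ?_)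
      (hr ▸ mem_take_two_set_cons_cons n x r i)
    rcases List.mem_or_eq_of_mem_set hv with hv | rfl
    exacts [hle v hv, hx]
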